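/- Let K be a complete nonarchimedean discretely valued field with valuation ring K°, and let T₁ = K{y} be the Tate algebra of restricted power series in one variable (power series Σ aₙ yⁿ with |aₙ| → 0). Then every nonzero f ∈ T₁ can be written as f = u·g where u ∈ T₁^× is a unit and g ∈ K°[y] is a polynomial with coefficients in the valuation ring; moreover g can be chosen monic after scaling. -/

import Mathlib

/-!
Normalize `f` by its last coefficient `f_N` of maximal valuation: `f₀ = f / f_N` has Gauss
norm `1` and is distinguished of degree `N`. Weierstrass division of `X ^ N` by `f₀` gives
`X ^ N - r = q * f₀`, where `g = X ^ N - r` is monic with integral coefficients. The division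
is built by successive approximation: dividing a truncation of the dividend by the polynomial
part of `f₀` leaves an error smaller by a fixed factor `ρ < 1`, and the corrections converge
by completeness. Gauss's lemma then forces `q` to be distinguished of degree `0`, and dividing
`1` by `q` shows that `q` is a unit of the Tate algebra.
-/

open scoped NNReal
open Filter

/-- A power series over a valued field is *restricted* (i.e. lies in the one-variable
Tate algebra `T₁ = K{y}`) if its coefficients tend to `0`. -/
def IsRestrictedPS (K : Type) [Field K] [Valued K ℝ≥0] (f : PowerSeries K) : Prop :=
  Tendsto (fun n : ℕ => Valued.v (PowerSeries.coeff n f)) atTop (nhds 0)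

open scoped Polynomial Topology
open PowerSeries

section NNRealSequences

lemma NNReal.finite_setOf_le_of_tendsto_zero {u : ℕ → ℝ≥0} (hu : Tendsto u atTop (𝓝 0))
    {ε : ℝ≥0} (hε : 0 < ε) : {n | ε ≤ u n}.Finite := by
  rw [← Nat.cofinite_eq_atTop] at hu
  simpa using eventually_cofinite.1 (hu.eventually (gt_mem_nhds hε))

lemma NNReal.exists_forall_le_forall_lt_of_tendsto_zero {u : ℕ → ℝ≥0}
    (hu : Tendsto u atTop (𝓝 0)) {k : ℕ} (hk : u k ≠ 0) :
    ∃ N, (∀ n, u n ≤ u N) ∧ ∀ n, N < n → u n < u N := by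
  have hS := NNReal.finite_setOf_le_of_tendsto_zero hu (pos_iff_ne_zero.2 hk)
  obtain ⟨m, hmS, hm⟩ := Set.exists_max_image _ u hS ⟨k, le_refl (u k)⟩
  have hT : {n | u m ≤ u n}.Finite :=
    hS.subset fun n (hn : u m ≤ u n) => show u k ≤ u n from hmS.trans hn
  obtain ⟨N, hNT, hN⟩ := Set.exists_max_image _ id hT ⟨m, le_refl (u m)⟩
  have hle : ∀ n, u n ≤ u N := fun n => by
    by_cases hn : u k ≤ u n
    · exact (hm n hn).trans hNT
    · exact (not_le.1 hn).le.trans (hmS.trans hNT)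
  exact ⟨N, hle, fun n hNn => lt_of_le_of_ne (hle n) fun h =>
    hNn.not_ge (hN n (hNT.trans h.ge))⟩

lemma NNReal.exists_lt_one_forall_le_of_tendsto_zero {u : ℕ → ℝ≥0}
    (hu : Tendsto u atTop (𝓝 0)) (h1 : ∀ n, u n < 1) :
    ∃ ρ, 0 < ρ ∧ ρ < 1 ∧ ∀ n, u n ≤ ρ := by
  have hS := NNReal.finite_setOf_le_of_tendsto_zero hu (ε := 2⁻¹) (by norm_num)
  refine ⟨max 2⁻¹ (hS.toFinset.sup u), by positivity, max_lt (by norm_num) ?_, fun n => ?_⟩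
  · exact (Finset.sup_lt_iff zero_lt_one).2 fun n _ => h1 n
  · by_cases hn : 2⁻¹ ≤ u n
    · exact le_max_of_le_right (Finset.le_sup (hS.mem_toFinset.2 hn))
    · exact le_max_of_le_left (not_le.1 hn).le

end NNRealSequences

section ValuedField

variable {K : Type*} [Field K] [Valued K ℝ≥0]

lemma Valued.isClosed_setOf_valuation_le (c : ℝ≥0) : IsClosed {x : K | Valued.v x ≤ c} := by
  refine isOpen_compl_iff.1 <| isOpen_iff_mem_nhds.2 fun y hy => ?_
  have hcy : c < Valued.v y := not_le.1 hy
  refine Valued.mem_nhds.2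
    ⟨Units.mk0 (Valued.v.restrict y) (by simpa using hcy.ne_bot), fun z hz => ?_⟩
  simp only [Set.mem_ofPred_eq, Units.val_mk0, Valuation.restrict_lt_iff] at hz
  have hzy : Valued.v z = Valued.v y := by
    simpa using Valued.v.map_add_eq_of_lt_left (x := y) hz
  simpa [hzy] using hcy

instance Valued.toNonarchimedeanAddGroup : NonarchimedeanAddGroup K where
  is_nonarchimedean U hU := by
    obtain ⟨γ, hγ⟩ := Valued.mem_nhds_zero.1 hU
    exact ⟨⟨Valued.v.restrict.ltAddSubgroup γ, by exact Valued.isOpen_ball K γ.1⟩, hγ⟩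

lemma Valued.tendsto_zero_of_tendsto_valuation {ι : Type*} {l : Filter ι} {x : ι → K}
    (h : Tendsto (fun i => Valued.v (x i)) l (𝓝 0)) : Tendsto x l (𝓝 0) := by
  intro U hU
  obtain ⟨γ, hγ⟩ := Valued.mem_nhds_zero.1 hU
  have hγ0 := (Valued.v.restrict_lt_iff_lt_embedding (x := (0 : K)) (g := γ.1)).1 (by simp)
  rw [map_zero] at hγ0
  exact mem_of_superset (h (gt_mem_nhds hγ0))
    fun i hi => hγ (Valued.v.restrict_lt_iff_lt_embedding.2 hi)

lemma Valued.summable_of_tendsto_valuation [CompleteSpace K] {x : ℕ → K}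
    (h : Tendsto (fun i => Valued.v (x i)) atTop (𝓝 0)) : Summable x :=
  NonarchimedeanAddGroup.summable_of_tendsto_cofinite_zero <|
    Nat.cofinite_eq_atTop ▸ Valued.tendsto_zero_of_tendsto_valuation h

lemma Valued.valuation_tsum_le {ι : Type*} {x : ι → K} {c : ℝ≥0}
    (h : ∀ i, Valued.v (x i) ≤ c) : Valued.v (∑' i, x i) ≤ c := by
  by_cases hx : Summable x
  · exact (Valued.isClosed_setOf_valuation_le c).mem_of_tendsto hx.hasSum
      (Eventually.of_forall fun s => Valued.v.map_sum_le fun i _ => h i)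
  · simp [tsum_eq_zero_of_not_summable hx]

end ValuedField

section Restricted

variable {K : Type} [Field K] [Valued K ℝ≥0]

namespace IsRestrictedPS

lemma polynomial (p : K[X]) : IsRestrictedPS K p := by
  refine tendsto_const_nhds.congr' ?_
  filter_upwards [eventually_gt_atTop p.natDegree] with n hn
  simp [Polynomial.coeff_eq_zero_of_natDegree_lt hn]

lemma add {f g : PowerSeries K} (hf : IsRestrictedPS K f) (hg : IsRestrictedPS K g) :
    IsRestrictedPS K (f + g) :=
  tendsto_of_tendsto_of_tendsto_of_le_of_le tendsto_const_nhds (by simpa using Tendsto.add hf hg)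
    (fun _ => zero_le) fun n => by
      simpa using (Valued.v.map_add _ _).trans (max_le_add_of_nonneg zero_le zero_le)

lemma sub {f g : PowerSeries K} (hf : IsRestrictedPS K f) (hg : IsRestrictedPS K g) :
    IsRestrictedPS K (f - g) :=
  tendsto_of_tendsto_of_tendsto_of_le_of_le tendsto_const_nhds (by simpa using Tendsto.add hf hg)
    (fun _ => zero_le) fun n => by
      simpa using (Valued.v.map_sub _ _).trans (max_le_add_of_nonneg zero_le zero_le)

lemma sum {ι : Type*} (s : Finset ι) {f : ι → PowerSeries K}
    (hf : ∀ i ∈ s, IsRestrictedPS K (f i)) : IsRestrictedPS K (∑ i ∈ s, f i) :=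
  Finset.sum_induction f _ (fun _ _ => add) (by simpa using polynomial (0 : K[X])) hf

lemma C_mul {f : PowerSeries K} (hf : IsRestrictedPS K f) (c : K) :
    IsRestrictedPS K (C c * f) := by
  simpa [IsRestrictedPS] using hf.const_mul (Valued.v c)

lemma X_pow_mul {f : PowerSeries K} (hf : IsRestrictedPS K f) (k : ℕ) :
    IsRestrictedPS K (X ^ k * f) := by
  refine (hf.comp (tendsto_sub_atTop_nat k)).congr' ?_
  filter_upwards [eventually_ge_atTop k] with n hn
  simp [coeff_X_pow_mul', hn]

lemma polynomial_mul {f : PowerSeries K} (hf : IsRestrictedPS K f) (p : K[X]) :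
    IsRestrictedPS K (p * f) := by
  induction p using Polynomial.induction_on' with
  | add p q hp hq => simpa [add_mul] using hp.add hq
  | monomial k a => simpa [← Polynomial.C_mul_X_pow_eq_monomial, mul_assoc] using
      (hf.X_pow_mul k).C_mul a

end IsRestrictedPS

lemma valuation_coeff_mul_le {f g : PowerSeries K} {s t : ℝ≥0}
    (hf : ∀ n, Valued.v (coeff n f) ≤ s) (hg : ∀ n, Valued.v (coeff n g) ≤ t) (n : ℕ) :
    Valued.v (coeff n (f * g)) ≤ s * t := by
  rw [coeff_mul]
  exact Valued.v.map_sum_le fun ij _ => by rw [map_mul]; exact mul_le_mul' (hf _) (hg _)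

lemma valuation_coeff_trunc_le {f : PowerSeries K} {c : ℝ≥0}
    (hf : ∀ n, Valued.v (coeff n f) ≤ c) (D i : ℕ) : Valued.v ((trunc D f).coeff i) ≤ c := by
  rw [coeff_trunc]
  split_ifs
  exacts [hf i, by simp]

lemma valuation_coeff_sub_trunc_le {f : PowerSeries K} {D : ℕ} {c : ℝ≥0}
    (hf : ∀ n, D ≤ n → Valued.v (coeff n f) ≤ c) (n : ℕ) :
    Valued.v (coeff n (f - (trunc D f : PowerSeries K))) ≤ c := by
  rw [map_sub, Polynomial.coeff_coe, coeff_trunc]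
  split_ifs with hn
  · simp
  · simpa using hf n (not_lt.1 hn)

end Restricted

section Distinguished

variable {K : Type} [Field K] [Valued K ℝ≥0]

/-- Distinguished of degree `N` in the sense of Bosch–Güntzer–Remmert,
*Non-Archimedean Analysis*. -/
structure IsDistinguishedOfDegree (f : PowerSeries K) (N : ℕ) : Prop where
  coeff_ne_zero : coeff N f ≠ 0
  valuation_coeff_le : ∀ n, Valued.v (coeff n f) ≤ Valued.v (coeff N f)
  valuation_coeff_lt : ∀ n, N < n → Valued.v (coeff n f) < Valued.v (coeff N f)

namespace IsDistinguishedOfDegree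

variable {f g : PowerSeries K} {m N : ℕ}

lemma valuation_coeff_ne_zero (hf : IsDistinguishedOfDegree f N) :
    Valued.v (coeff N f) ≠ 0 :=
  (Valuation.ne_zero_iff _).2 hf.coeff_ne_zero

lemma C_mul (hf : IsDistinguishedOfDegree f N) {c : K} (hc : c ≠ 0) :
    IsDistinguishedOfDegree (C c * f) N := by
  have hvc : 0 < Valued.v c := pos_iff_ne_zero.2 ((Valuation.ne_zero_iff _).2 hc)
  refine ⟨by simp [hc, hf.coeff_ne_zero], fun n => ?_, fun n hn => ?_⟩
  · simpa using mul_le_mul_right (hf.valuation_coeff_le n) (Valued.v c)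
  · simpa using mul_lt_mul_of_pos_left (hf.valuation_coeff_lt n hn) hvc

lemma valuation_coeff_add_mul (hf : IsDistinguishedOfDegree f m)
    (hg : IsDistinguishedOfDegree g N) :
    Valued.v (coeff (m + N) (f * g)) = Valued.v (coeff m f) * Valued.v (coeff N g) := by
  have hmem : (m, N) ∈ Finset.HasAntidiagonal.antidiagonal (m + N) :=
    Finset.HasAntidiagonal.mem_antidiagonal.2 rfl
  rw [coeff_mul, ← Finset.add_sum_erase _ _ hmem, Valued.v.map_add_eq_of_lt_left, map_mul]
  refine Valued.v.map_sum_lt (by simpa using ⟨hf.coeff_ne_zero, hg.coeff_ne_zero⟩) ?_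
  -- every other term `f_i * g_j` has `m < i` or `N < j`, hence a strictly smaller valuation
  rintro ⟨i, j⟩ hij
  obtain ⟨hne, hsum⟩ := by simpa using hij
  rw [map_mul, map_mul]
  rcases lt_or_gt_of_ne (show i ≠ m by omega) with hi | hi
  · exact mul_lt_mul_of_le_of_lt_of_nonneg_of_pos (hf.valuation_coeff_le i)
      (hg.valuation_coeff_lt j (by omega)) zero_le (pos_iff_ne_zero.2 hf.valuation_coeff_ne_zero)
  · exact mul_lt_mul_of_lt_of_le_of_nonneg_of_pos (hf.valuation_coeff_lt i hi)
      (hg.valuation_coeff_le j) zero_le (pos_iff_ne_zero.2 hg.valuation_coeff_ne_zero)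

lemma eq_zero_of_mul_eq_polynomial (hf : IsDistinguishedOfDegree f m)
    (hg : IsDistinguishedOfDegree g N) {p : K[X]} (hp : p.natDegree ≤ N) (hfg : f * g = p) :
    m = 0 := by
  by_contra hm
  have h := hf.valuation_coeff_add_mul hg
  rw [hfg, Polynomial.coeff_coe, Polynomial.coeff_eq_zero_of_natDegree_lt (by omega),
    map_zero] at h
  exact mul_ne_zero hf.valuation_coeff_ne_zero hg.valuation_coeff_ne_zero h.symm

end IsDistinguishedOfDegree

lemma IsRestrictedPS.exists_isDistinguishedOfDegree {f : PowerSeries K}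
    (hf : IsRestrictedPS K f) (hf0 : f ≠ 0) : ∃ N, IsDistinguishedOfDegree f N := by
  obtain ⟨k, hk⟩ := exists_coeff_ne_zero_iff_ne_zero.2 hf0
  obtain ⟨N, hle, hlt⟩ := NNReal.exists_forall_le_forall_lt_of_tendsto_zero hf
    ((Valuation.ne_zero_iff _).2 hk)
  exact ⟨N, fun hN => hk (by simpa [hN] using hle k), hle, hlt⟩

lemma Polynomial.isDistinguishedOfDegree_natDegree {A : K[X]}
    (hA : ∀ i, Valued.v (A.coeff i) ≤ 1) (hAlc : Valued.v A.leadingCoeff = 1) :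
    IsDistinguishedOfDegree (A : PowerSeries K) A.natDegree := by
  have hA0 : A ≠ 0 := fun h => by simp [h] at hAlc
  refine ⟨by simpa using hA0, fun n => ?_, fun n hn => ?_⟩
  · simpa [hAlc] using hA n
  · simp [coeff_eq_zero_of_natDegree_lt hn, hAlc]

lemma Polynomial.valuation_coeff_div_mod_le {A P : K[X]} {s : ℝ≥0}
    (hA : ∀ i, Valued.v (A.coeff i) ≤ 1) (hAlc : Valued.v A.leadingCoeff = 1)
    (hP : ∀ i, Valued.v (P.coeff i) ≤ s) :
    (∀ i, Valued.v ((P / A).coeff i) ≤ s) ∧ ∀ i, Valued.v ((P % A).coeff i) ≤ s := by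
  have hAd := isDistinguishedOfDegree_natDegree hA hAlc
  have hA0 : A ≠ 0 := fun h => by simp [h] at hAlc
  have hQ : ∀ i, Valued.v ((P / A).coeff i) ≤ s := by
    rcases eq_or_ne (P / A) 0 with h0 | h0
    · simp [h0]
    obtain ⟨m, hm⟩ := (IsRestrictedPS.polynomial (P / A)).exists_isDistinguishedOfDegree
      (by simpa using h0)
    -- `P % A` does not reach the coefficient of degree `m + deg A` of `P = P / A * A + P % A`
    have hmod : (P % A).coeff (m + A.natDegree) = 0 :=
      coeff_eq_zero_of_degree_lt <| (degree_mod_lt P hA0).trans_le <|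
        degree_le_natDegree.trans (by exact_mod_cast Nat.le_add_left _ _)
    have hPm : (P / A * A).coeff (m + A.natDegree) = P.coeff (m + A.natDegree) := by
      conv_rhs => rw [← EuclideanDomain.div_add_mod' P A]
      rw [coeff_add, hmod, add_zero]
    have hgauss := hm.valuation_coeff_add_mul hAd
    rw [← coe_mul, coeff_coe, hPm, coeff_coe, coeff_coe, ← leadingCoeff, hAlc, mul_one] at hgauss
    intro i
    calc Valued.v ((P / A).coeff i) ≤ Valued.v ((P / A).coeff m) := by
          simpa using hm.valuation_coeff_le i
      _ = Valued.v (P.coeff (m + A.natDegree)) := hgauss.symm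
      _ ≤ s := hP _
  refine ⟨hQ, fun i => ?_⟩
  rw [EuclideanDomain.mod_eq_sub_mul_div, coeff_sub]
  refine (Valued.v.map_sub _ _).trans (max_le (hP i) ?_)
  have h := valuation_coeff_mul_le (f := ((P / A : K[X]) : PowerSeries K)) (g := A)
    (by simpa using hQ) (by simpa using hA) i
  rwa [← coe_mul, coeff_coe, mul_one, mul_comm] at h

end Distinguished

section Division

variable {K : Type} [Field K] [Valued K ℝ≥0]

lemma exists_approx_weierstrass_division {F h : PowerSeries K} {N : ℕ} {ρ s : ℝ≥0}
    (hF : IsRestrictedPS K F) (hF1 : ∀ n, Valued.v (coeff n F) ≤ 1)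
    (hFN : Valued.v (coeff N F) = 1) (hFρ : ∀ n, N < n → Valued.v (coeff n F) ≤ ρ)
    (hh : IsRestrictedPS K h) (hhs : ∀ n, Valued.v (coeff n h) ≤ s) (hρs : 0 < ρ * s) :
    ∃ q r : K[X], r.degree < N ∧ (∀ i, Valued.v (q.coeff i) ≤ s) ∧
      (∀ i, Valued.v (r.coeff i) ≤ s) ∧ IsRestrictedPS K (h - q * F - r) ∧
      ∀ n, Valued.v (coeff n (h - (q : PowerSeries K) * F - (r : PowerSeries K))) ≤ ρ * s := by
  set A := trunc (N + 1) F
  have hAN : A.natDegree = N := Polynomial.natDegree_eq_of_le_of_coeff_ne_zero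
    (Nat.lt_succ_iff.1 (natDegree_trunc_lt F N))
    (by rw [coeff_trunc, if_pos N.lt_succ_self]; exact fun h0 => by simp [h0] at hFN)
  have hAlc : Valued.v A.leadingCoeff = 1 := by
    simpa [Polynomial.leadingCoeff, hAN, A, coeff_trunc] using hFN
  have hA0 : A ≠ 0 := fun h => by simp [h] at hAlc
  obtain ⟨D, hD⟩ := eventually_atTop.1 (hh.eventually (gt_mem_nhds hρs))
  set P := trunc D h
  obtain ⟨hQ, hR⟩ := Polynomial.valuation_coeff_div_mod_le (valuation_coeff_trunc_le hF1 _) hAlc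
    (valuation_coeff_trunc_le hhs D)
  have hPQR : (P : PowerSeries K) = ((P / A : K[X]) : PowerSeries K) * A + (P % A : K[X]) := by
    rw [← Polynomial.coe_mul, ← Polynomial.coe_add, EuclideanDomain.div_add_mod']
  -- the error consists of the tails of `h` and of `F` discarded by the truncations
  have hw : h - ((P / A : K[X]) : PowerSeries K) * F - (P % A : K[X]) =
      (h - P) - ((P / A : K[X]) : PowerSeries K) * (F - A) := by
    rw [hPQR]; ring
  have hhP := valuation_coeff_sub_trunc_le fun n hn => (hD n hn).le
  have hFA := valuation_coeff_sub_trunc_le (D := N + 1) hFρ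
  refine ⟨P / A, P % A, ?_, hQ, hR, ?_, fun n => ?_⟩
  · simpa [Polynomial.degree_eq_natDegree hA0, hAN] using Polynomial.degree_mod_lt P hA0
  · rw [hw]
    exact (hh.sub (.polynomial P)).sub ((hF.sub (.polynomial A)).polynomial_mul _)
  · rw [hw, map_sub]
    refine (Valued.v.map_sub _ _).trans (max_le (hhP n) ?_)
    rw [mul_comm ρ]
    exact valuation_coeff_mul_le (f := ((P / A : K[X]) : PowerSeries K)) (by simpa using hQ) hFA n

lemma exists_weierstrass_approximations {F h : PowerSeries K} {N : ℕ} {ρ : ℝ≥0}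
    (hF : IsRestrictedPS K F) (hF1 : ∀ n, Valued.v (coeff n F) ≤ 1)
    (hFN : Valued.v (coeff N F) = 1) (hFρ : ∀ n, N < n → Valued.v (coeff n F) ≤ ρ)
    (hρ : 0 < ρ) (hh : IsRestrictedPS K h) (hh1 : ∀ n, Valued.v (coeff n h) ≤ 1) :
    ∃ (q r : ℕ → K[X]) (H : ℕ → PowerSeries K), H 0 = h ∧
      (∀ k, H k = (q k : PowerSeries K) * F + r k + H (k + 1)) ∧ (∀ k, (r k).degree < N) ∧
      (∀ k i, Valued.v ((q k).coeff i) ≤ ρ ^ k) ∧ (∀ k i, Valued.v ((r k).coeff i) ≤ ρ ^ k) ∧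
      ∀ k n, Valued.v (coeff n (H k)) ≤ ρ ^ k := by
  have step (k : ℕ) (g : PowerSeries K) : ∃ q r : K[X],
      IsRestrictedPS K g ∧ (∀ n, Valued.v (coeff n g) ≤ ρ ^ k) →
      r.degree < N ∧ (∀ i, Valued.v (q.coeff i) ≤ ρ ^ k) ∧
      (∀ i, Valued.v (r.coeff i) ≤ ρ ^ k) ∧ IsRestrictedPS K (g - q * F - r) ∧
      ∀ n, Valued.v (coeff n (g - (q : PowerSeries K) * F - (r : PowerSeries K))) ≤
        ρ ^ (k + 1) := by
    by_cases hg : IsRestrictedPS K g ∧ ∀ n, Valued.v (coeff n g) ≤ ρ ^ k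
    · obtain ⟨q, r, hqr⟩ :=
        exists_approx_weierstrass_division hF hF1 hFN hFρ hg.1 hg.2 (by positivity)
      exact ⟨q, r, fun _ => by simpa [pow_succ'] using hqr⟩
    · exact ⟨0, 0, fun hg' => (hg hg').elim⟩
  choose q r hqr using step
  let H : ℕ → PowerSeries K :=
    fun k => Nat.rec h (fun k g => g - (q k g : PowerSeries K) * F - r k g) k
  have hH (k : ℕ) : IsRestrictedPS K (H k) ∧ ∀ n, Valued.v (coeff n (H k)) ≤ ρ ^ k := by
    induction k with
    | zero => exact ⟨hh, hh1⟩
    | succ k ih => exact (hqr k _ ih).2.2.2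
  refine ⟨fun k => q k (H k), fun k => r k (H k), H, rfl, fun k => ?_,
    fun k => (hqr k _ (hH k)).1, fun k => (hqr k _ (hH k)).2.1,
    fun k => (hqr k _ (hH k)).2.2.1, fun k => (hH k).2⟩
  change H k = _ + _ + (H k - (q k (H k) : PowerSeries K) * F - r k (H k))
  ring

end Division

section Summation

open PowerSeries.WithPiTopology

variable {K : Type} [Field K] [Valued K ℝ≥0]

lemma tendsto_valuation_coeff_of_le_pow {f : ℕ → PowerSeries K} {ρ : ℝ≥0} (hρ : ρ < 1)
    (hf : ∀ k n, Valued.v (coeff n (f k)) ≤ ρ ^ k) (n : ℕ) :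
    Tendsto (fun k => Valued.v (coeff n (f k))) atTop (𝓝 0) :=
  tendsto_of_tendsto_of_tendsto_of_le_of_le tendsto_const_nhds
    (NNReal.tendsto_pow_atTop_nhds_zero_of_lt_one hρ) (fun _ => zero_le) fun k => hf k n

lemma tendsto_zero_of_valuation_coeff_le_pow {f : ℕ → PowerSeries K} {ρ : ℝ≥0} (hρ : ρ < 1)
    (hf : ∀ k n, Valued.v (coeff n (f k)) ≤ ρ ^ k) : Tendsto f atTop (𝓝 0) :=
  (tendsto_iff_coeff_tendsto _ _ _ _).2 fun n => by
    simpa using Valued.tendsto_zero_of_tendsto_valuation (tendsto_valuation_coeff_of_le_pow hρ hf n)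

lemma summable_of_valuation_coeff_le_pow [CompleteSpace K] {f : ℕ → PowerSeries K} {ρ : ℝ≥0}
    (hρ : ρ < 1) (hf : ∀ k n, Valued.v (coeff n (f k)) ≤ ρ ^ k) : Summable f :=
  (summable_iff_summable_coeff _).2 fun n =>
    Valued.summable_of_tendsto_valuation (tendsto_valuation_coeff_of_le_pow hρ hf n)

lemma valuation_coeff_tsum_le {ι : Type*} {f : ι → PowerSeries K} (hf : Summable f) {c : ℝ≥0}
    {n : ℕ} (hc : ∀ k, Valued.v (coeff n (f k)) ≤ c) : Valued.v (coeff n (∑' k, f k)) ≤ c := by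
  rw [← ((hasSum_iff_hasSum_coeff K).1 hf.hasSum n).tsum_eq]
  exact Valued.valuation_tsum_le hc

lemma IsRestrictedPS.tsum [CompleteSpace K] {f : ℕ → PowerSeries K} {ρ : ℝ≥0} (hρ : ρ < 1)
    (hfr : ∀ k, IsRestrictedPS K (f k)) (hf : ∀ k n, Valued.v (coeff n (f k)) ≤ ρ ^ k) :
    IsRestrictedPS K (∑' k, f k) := by
  have hs := summable_of_valuation_coeff_le_pow hρ hf
  refine tendsto_order.2 ⟨fun a ha => (not_lt_zero ha).elim, fun ε hε => ?_⟩
  obtain ⟨k, hk⟩ :=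
    ((NNReal.tendsto_pow_atTop_nhds_zero_of_lt_one hρ).eventually (gt_mem_nhds hε)).exists
  -- the head `∑ i < k` is restricted and the tail is bounded by `ρ ^ k < ε`
  have htail (n : ℕ) : Valued.v (coeff n (∑' i, f (i + k))) < ε := by
    have hs' : Summable fun i => f (i + k) := (summable_nat_add_iff k).2 hs
    refine (valuation_coeff_tsum_le hs' fun i => ?_).trans_lt hk
    exact (hf (i + k) n).trans (pow_le_pow_of_le_one zero_le hρ.le (Nat.le_add_left k i))
  have hhead : ∀ᶠ n in atTop, Valued.v (coeff n (∑ i ∈ Finset.range k, f i)) < ε :=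
    (IsRestrictedPS.sum (Finset.range k) fun i _ => hfr i).eventually (gt_mem_nhds hε)
  filter_upwards [hhead] with n hn
  rw [← hs.sum_add_tsum_nat_add k, map_add]
  exact (Valued.v.map_add _ _).trans_lt (max_lt hn (htail n))

theorem exists_weierstrass_division [CompleteSpace K] {F h : PowerSeries K} {N : ℕ}
    (hF : IsRestrictedPS K F) (hFN : IsDistinguishedOfDegree F N)
    (hF1 : Valued.v (coeff N F) = 1) (hh : IsRestrictedPS K h)
    (hh1 : ∀ n, Valued.v (coeff n h) ≤ 1) :
    ∃ (q : PowerSeries K) (r : K[X]), IsRestrictedPS K q ∧ (∀ n, Valued.v (coeff n q) ≤ 1) ∧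
      r.degree < N ∧ (∀ i, Valued.v (r.coeff i) ≤ 1) ∧ h = q * F + r := by
  obtain ⟨ρ, hρ0, hρ1, hρ⟩ := NNReal.exists_lt_one_forall_le_of_tendsto_zero
    (hF.comp (tendsto_add_atTop_nat (N + 1))) fun n => by
      simpa [hF1] using hFN.valuation_coeff_lt (n + (N + 1)) (by omega)
  obtain ⟨q, r, H, hH0, hH, hr, hq1, hr1, hH1⟩ := exists_weierstrass_approximations hF
    (fun n => hF1 ▸ hFN.valuation_coeff_le n) hF1
    (fun n hn => by simpa [Nat.sub_add_cancel hn] using hρ (n - (N + 1))) hρ0 hh hh1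
  have hq1' : ∀ k n, Valued.v (coeff n (q k : PowerSeries K)) ≤ ρ ^ k := by simpa using hq1
  have hr1' : ∀ k n, Valued.v (coeff n (r k : PowerSeries K)) ≤ ρ ^ k := by simpa using hr1
  have hqs := summable_of_valuation_coeff_le_pow hρ1 hq1'
  have hrs := summable_of_valuation_coeff_le_pow hρ1 hr1'
  set Q := ∑' k, (q k : PowerSeries K)
  set R := ∑' k, (r k : PowerSeries K)
  have hpow (k : ℕ) : ρ ^ k ≤ 1 := pow_le_one₀ zero_le hρ1.le
  have hR : (trunc N R : PowerSeries K) = R := by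
    ext n
    rw [Polynomial.coeff_coe, coeff_trunc]
    split_ifs with hn
    · rfl
    · refine ((Valuation.zero_iff _).1 (le_antisymm (valuation_coeff_tsum_le hrs fun k => ?_)
        zero_le)).symm
      simp [Polynomial.coeff_eq_zero_of_degree_lt ((hr k).trans_le (by exact_mod_cast not_lt.1 hn))]
  -- `h - H k` are the partial sums of `∑ (q k * F + r k)`, and `H k → 0`
  have hsum : h = Q * F + R := by
    refine tendsto_nhds_unique ?_ ((hqs.hasSum.mul_right F).add hrs.hasSum).tendsto_sum_nat
    have hpartial (k : ℕ) : ∑ i ∈ Finset.range k, ((q i : PowerSeries K) * F + r i) = h - H k := by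
      rw [← hH0, ← Finset.sum_range_sub']
      exact Finset.sum_congr rfl fun i _ => by rw [hH i]; ring
    simpa [hpartial] using tendsto_const_nhds.sub (tendsto_zero_of_valuation_coeff_le_pow hρ1 hH1)
  refine ⟨Q, trunc N R, IsRestrictedPS.tsum hρ1 (fun k => .polynomial _) hq1',
    fun n => valuation_coeff_tsum_le hqs fun k => (hq1' k n).trans (hpow k), degree_trunc_lt R N,
    fun i => ?_, by rw [hR, hsum]⟩
  rw [← Polynomial.coeff_coe, hR]
  exact valuation_coeff_tsum_le hrs fun k => (hr1' k i).trans (hpow k)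

end Summation

section Preparation

variable {K : Type} [Field K] [Valued K ℝ≥0]

lemma IsRestrictedPS.exists_mul_eq_one [CompleteSpace K] {q : PowerSeries K}
    (hq : IsRestrictedPS K q) (hq0 : IsDistinguishedOfDegree q 0)
    (hq1 : Valued.v (coeff 0 q) = 1) : ∃ s, IsRestrictedPS K s ∧ s * q = 1 := by
  obtain ⟨s, r, hs, -, hr, -, hsr⟩ := exists_weierstrass_division hq hq0 hq1
    (by simpa using IsRestrictedPS.polynomial (1 : K[X])) fun n => by
      rw [coeff_one]; split_ifs <;> simp
  have hr0 : r = 0 := Polynomial.degree_eq_bot.1 (Nat.WithBot.lt_zero_iff.1 hr)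
  exact ⟨s, hs, by simpa [hr0] using hsr.symm⟩

theorem exists_weierstrass_preparation [CompleteSpace K] {F : PowerSeries K} {N : ℕ}
    (hF : IsRestrictedPS K F) (hFN : IsDistinguishedOfDegree F N)
    (hF1 : Valued.v (coeff N F) = 1) :
    ∃ (s q : PowerSeries K) (g : K[X]), IsRestrictedPS K s ∧ IsRestrictedPS K q ∧ s * q = 1 ∧
      g.Monic ∧ (∀ i, Valued.v (g.coeff i) ≤ 1) ∧ q * F = g := by
  obtain ⟨q, r, hq, -, hr, hr1, hdiv⟩ := exists_weierstrass_division hF hFN hF1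
    (.polynomial (Polynomial.X ^ N)) fun n => by
      rw [Polynomial.coeff_coe, Polynomial.coeff_X_pow]; split_ifs <;> simp
  set g := Polynomial.X ^ N - r
  have hg : q * F = g := by simp [g, hdiv]
  have hgmonic : g.Monic := Polynomial.monic_X_pow_sub hr
  have hgN : g.natDegree = N := Polynomial.natDegree_eq_of_degree_eq_some <|
    (Polynomial.degree_sub_eq_left_of_degree_lt (by rwa [Polynomial.degree_X_pow])).trans
      (Polynomial.degree_X_pow N)
  obtain ⟨m, hm⟩ := hq.exists_isDistinguishedOfDegree fun h0 =>
    hgmonic.ne_zero (by simpa [h0] using hg.symm)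
  obtain rfl := hm.eq_zero_of_mul_eq_polynomial hFN hgN.le hg
  have hq0 : Valued.v (coeff 0 q) = 1 := by
    have h := hm.valuation_coeff_add_mul hFN
    rw [zero_add, hg, Polynomial.coeff_coe, hF1, mul_one, ← hgN, hgmonic.coeff_natDegree] at h
    simpa using h.symm
  obtain ⟨s, hs, hsq⟩ := hq.exists_mul_eq_one hm hq0
  refine ⟨s, q, g, hs, hq, hsq, hgmonic, fun i => ?_, hg⟩
  rw [Polynomial.coeff_sub, Polynomial.coeff_X_pow]
  refine (Valued.v.map_sub _ _).trans (max_le ?_ (hr1 i))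
  split_ifs <;> simp

end Preparation

theorem stmt11_general (K : Type) [Field K] [Valued K ℝ≥0] [CompleteSpace K]
    (f : PowerSeries K) (hf : IsRestrictedPS K f) (hf0 : f ≠ 0) :
    ∃ (u uinv : PowerSeries K) (g : Polynomial K),
      IsRestrictedPS K u ∧ IsRestrictedPS K uinv ∧ u * uinv = 1 ∧
      (∀ i : ℕ, Valued.v (g.coeff i) ≤ 1) ∧
      f = u * (g : PowerSeries K) ∧
      ∃ c : K, c ≠ 0 ∧ (Polynomial.C c * g).Monic := by
  obtain ⟨N, hN⟩ := hf.exists_isDistinguishedOfDegree hf0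
  set c := coeff N f
  have hc : c ≠ 0 := hN.coeff_ne_zero
  have hcc : C c * C c⁻¹ = (1 : PowerSeries K) := by rw [← map_mul, mul_inv_cancel₀ hc, map_one]
  obtain ⟨s, q, g, hs, hq, hsq, hg, hg1, hqg⟩ := exists_weierstrass_preparation (hf.C_mul c⁻¹)
    (hN.C_mul (inv_ne_zero hc)) (by simp [c, hc])
  refine ⟨C c * s, C c⁻¹ * q, g, hs.C_mul c, hq.C_mul _, ?_, hg1, ?_, 1, one_ne_zero,
    by simpa using hg⟩
  · calc C c * s * (C c⁻¹ * q) = C c * C c⁻¹ * (s * q) := by ring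
      _ = 1 := by rw [hcc, hsq, one_mul]
  · calc f = C c * C c⁻¹ * (s * q) * f := by rw [hcc, hsq, one_mul, one_mul]
      _ = C c * s * (q * (C c⁻¹ * f)) := by ring
      _ = C c * s * g := by rw [hqg]

/-- Weierstrass-type factorization in the one-variable Tate algebra over a complete
nonarchimedean discretely valued field: every nonzero restricted power series `f` can be
written as `f = u·g` with `u` a unit of the Tate algebra and `g` a polynomial with
coefficients in the valuation ring; moreover `g` can be chosen monic after scaling. -/
theorem stmt11 (K : Type) [Field K] [Valued K ℝ≥0] [CompleteSpace K]
    (π : K) (hπ0 : Valued.v π ≠ 0) (hπ1 : Valued.v π < 1)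
    (hdisc : ∀ x : K, x ≠ 0 → ∃ n : ℤ, Valued.v x = Valued.v π ^ n)
    (f : PowerSeries K) (hf : IsRestrictedPS K f) (hf0 : f ≠ 0) :
    ∃ (u uinv : PowerSeries K) (g : Polynomial K),
      IsRestrictedPS K u ∧ IsRestrictedPS K uinv ∧ u * uinv = 1 ∧
      (∀ i : ℕ, Valued.v (g.coeff i) ≤ 1) ∧
      f = u * (g : PowerSeries K) ∧
      ∃ c : K, c ≠ 0 ∧ (Polynomial.C c * g).Monic :=
  stmt11_general K f hf hf0
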